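/- Let g be the morphism g(0)=103230, g(1)=1030, g(2)=12 from {0,1,2}* to {0,1,2,3}*. If w is an infinite word over {0,1,2,3} that is a Dean word and avoids all six factors 101, 123, 212, 232, 303, 321, then w = u·g(v) for some finite word u with |u| ≤ 5 and some infinite square-free word v over {0,1,2}. -/

import Mathlib

def SqFree {α : Type*} (w : List α) : Prop :=
  ∀ v : List α, v ≠ [] → ¬ (v ++ v) <:+: w

def Reduced (w : List (Fin 4)) : Prop :=
  ∀ p ∈ ([[0,2],[2,0],[1,3],[3,1]] : List (List (Fin 4))), ¬ p <:+: w

def DeanWord (w : List (Fin 4)) : Prop := Reduced w ∧ SqFree w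

def IFactor {α : Type*} (v : List α) (w : ℕ → α) : Prop :=
  ∃ i, v = (List.range v.length).map fun k => w (i + k)

def ISqFree {α : Type*} (w : ℕ → α) : Prop :=
  ∀ v : List α, v ≠ [] → ¬ IFactor (v ++ v) w

def IReduced (w : ℕ → Fin 4) : Prop :=
  ∀ p ∈ ([[0,2],[2,0],[1,3],[3,1]] : List (List (Fin 4))), ¬ IFactor p w

def IDean (w : ℕ → Fin 4) : Prop := IReduced w ∧ ISqFree w

def S1 : List (List (Fin 4)) := [[1,0,1],[1,2,3],[2,1,2],[2,3,2],[3,0,3],[3,2,1]]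

def g : Fin 3 → List (Fin 4) := ![[1,0,3,2,3,0],[1,0,3,0],[1,2]]

/-- The `g`-image of an infinite word: each letter image has length `≥ 2`, so the
`g`-image of the first `m + 1` letters has length `> m` and determines letter `m`. -/
def gInf (v : ℕ → Fin 3) : ℕ → Fin 4 :=
  fun m => (((List.range (m + 1)).map v).flatMap g).getD m 0

/-- The infinite word `u · x` for a finite word `u` and an infinite word `x`. -/
def wappend (u : List (Fin 4)) (x : ℕ → Fin 4) : ℕ → Fin 4 :=
  fun n => if n < u.length then u.getD n 0 else x (n - u.length)

/-!
Every factor of length three of `w` is admissible: it has no repeated adjacent letter, no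
factor `02, 20, 13, 31` and is not in `S1`. A finite check shows that among any six
consecutive letters there is a `1`, and that after a `1` the admissibility constraints force
exactly one of `12`, `1030`, `103230` followed by the next `1`, i.e. `g c · 1`. Cutting `w`
at its first `1` (at position `≤ 5`) and parsing block by block writes `w = u · g(v)`; a square
`t t` in `v` would give the square `g(t) g(t)` in `w`.
-/

section Desubstitution

variable {α β : Type*}

/-- `IFactor v w` unfolds to `v = window w i v.length` for some `i`. -/
def window (w : ℕ → α) (i n : ℕ) : List α := (List.range n).map fun k => w (i + k)

/-- `gInf v m` unfolds to the letter `m` of `imagePrefix g v (m + 1)`. -/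
def imagePrefix (h : β → List α) (v : ℕ → β) (k : ℕ) : List α := ((List.range k).map v).flatMap h

@[simp]
lemma length_window (w : ℕ → α) (i n : ℕ) : (window w i n).length = n := by
  simp [window]

lemma iFactor_window (w : ℕ → α) (i n : ℕ) : IFactor (window w i n) w :=
  ⟨i, by rw [length_window]; rfl⟩

lemma window_add (w : ℕ → α) (i a b : ℕ) :
    window w i (a + b) = window w i a ++ window w (i + a) b := by
  simp [window, List.range_add, Nat.add_assoc]

lemma getD_window (w : ℕ → α) {i n k : ℕ} (hk : k < n) (d : α) :
    (window w i n).getD k d = w (i + k) := by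
  simp [window, hk]

lemma imagePrefix_add (h : β → List α) (v : ℕ → β) (a b : ℕ) :
    imagePrefix h v (a + b) = imagePrefix h v a ++ (window v a b).flatMap h := by
  simp [imagePrefix, window, List.range_add, Function.comp_def]

lemma imagePrefix_succ (h : β → List α) (v : ℕ → β) (k : ℕ) :
    imagePrefix h v (k + 1) = imagePrefix h v k ++ h (v k) := by
  simp [imagePrefix, List.range_succ]

lemma le_length_imagePrefix {h : β → List α} (hne : ∀ b, h b ≠ []) (v : ℕ → β) (k : ℕ) :
    k ≤ (imagePrefix h v k).length := by
  induction k with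
  | zero => simp
  | succ k ih =>
    have hk : (h (v k)).length ≠ 0 := by simpa using hne (v k)
    rw [imagePrefix_succ, List.length_append]
    omega

lemma exists_window_imagePrefix (h : β → List α) {w : ℕ → α} (P : ℕ → Prop)
    (hP : ∀ m, P m → ∃ b, window w m (h b).length = h b ∧ P (m + (h b).length))
    {i₀ : ℕ} (hi₀ : P i₀) :
    ∃ v : ℕ → β, ∀ k, window w i₀ (imagePrefix h v k).length = imagePrefix h v k := by
  choose next hnext hnextP using hP
  let pos : ℕ → {m // P m} := fun k =>
    Nat.rec ⟨i₀, hi₀⟩ (fun _ p => ⟨p.1 + (h (next p.1 p.2)).length, hnextP p.1 p.2⟩) k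
  set v : ℕ → β := fun k => next (pos k).1 (pos k).2
  refine ⟨v, fun k => ?_⟩
  suffices (pos k).1 = i₀ + (imagePrefix h v k).length ∧
      window w i₀ (imagePrefix h v k).length = imagePrefix h v k from this.2
  induction k with
  | zero => simp [pos, imagePrefix, window]
  | succ k ih =>
    obtain ⟨hpos, hwin⟩ := ih
    have hstep : window w (pos k).1 (h (v k)).length = h (v k) := hnext (pos k).1 (pos k).2
    rw [hpos] at hstep
    rw [imagePrefix_succ, List.length_append, window_add, hwin, hstep]
    refine ⟨?_, rfl⟩
    change (pos k).1 + (h (v k)).length = _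
    omega

variable {h : β → List α} {w : ℕ → α} {v : ℕ → β} {i₀ : ℕ}

lemma IFactor.flatMap_of_window_imagePrefix
    (hv : ∀ k, window w i₀ (imagePrefix h v k).length = imagePrefix h v k)
    {t : List β} (ht : IFactor t v) : IFactor (t.flatMap h) w := by
  obtain ⟨i, hi⟩ := ht
  have hsplit := imagePrefix_add h v i t.length
  rw [window, ← hi] at hsplit
  have hwin := hv (i + t.length)
  rw [hsplit, List.length_append, window_add, hv i] at hwin
  exact ⟨_, (List.append_cancel_left hwin).symm⟩

lemma ISqFree.of_window_imagePrefix (hne : ∀ b, h b ≠ []) (hw : ISqFree w)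
    (hv : ∀ k, window w i₀ (imagePrefix h v k).length = imagePrefix h v k) : ISqFree v := by
  intro t ht hsq
  obtain ⟨b, t', rfl⟩ := List.exists_cons_of_ne_nil ht
  refine hw ((b :: t').flatMap h) (by simp [hne b]) ?_
  simpa using hsq.flatMap_of_window_imagePrefix hv

lemma getD_imagePrefix (hne : ∀ b, h b ≠ [])
    (hv : ∀ k, window w i₀ (imagePrefix h v k).length = imagePrefix h v k) (n : ℕ) (d : α) :
    (imagePrefix h v (n + 1)).getD n d = w (i₀ + n) := by
  rw [← hv, getD_window]
  exact le_length_imagePrefix hne v (n + 1)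

end Desubstitution

def Admissible (a b c : Fin 4) : Prop :=
  a ≠ b ∧ b ≠ c ∧ [a, b] ∉ ([[0,2],[2,0],[1,3],[3,1]] : List (List (Fin 4))) ∧
    [b, c] ∉ ([[0,2],[2,0],[1,3],[3,1]] : List (List (Fin 4))) ∧ [a, b, c] ∉ S1

instance (a b c : Fin 4) : Decidable (Admissible a b c) := by
  unfold Admissible; infer_instance

set_option synthInstance.maxSize 1024 in
lemma admissible_parse : ∀ b c d e f x : Fin 4,
    Admissible 1 b c → Admissible b c d → Admissible c d e → Admissible d e f →
    Admissible e f x →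
    [1, b, c] = g 2 ++ [1] ∨ [1, b, c, d, e] = g 1 ++ [1] ∨ [1, b, c, d, e, f, x] = g 0 ++ [1] := by
  decide

lemma admissible_one_mem : ∀ a b c d e f : Fin 4,
    Admissible a b c → Admissible b c d → Admissible c d e → Admissible d e f →
    1 ∈ [a, b, c, d, e, f] := by
  decide

lemma g_ne_nil : ∀ c, g c ≠ [] := by decide

section DeanWord

variable {w : ℕ → Fin 4}

lemma IDean.admissible (hw : IDean w) (havoid : ∀ p ∈ S1, ¬ IFactor p w) (i : ℕ) :
    Admissible (w i) (w (i + 1)) (w (i + 2)) := by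
  have hpair (j : ℕ) : IFactor [w j, w (j + 1)] w := iFactor_window w j 2
  refine ⟨fun h => hw.2 [w i] (by simp) ?_, fun h => hw.2 [w (i + 1)] (by simp) ?_,
    fun h => hw.1 _ h (hpair i), fun h => hw.1 _ h (hpair (i + 1)),
    fun h => havoid _ h (iFactor_window w i 3)⟩
  · simpa [← h] using hpair i
  · simpa [← h] using hpair (i + 1)

lemma IDean.exists_lt_six_eq_one (hw : IDean w) (havoid : ∀ p ∈ S1, ¬ IFactor p w) :
    ∃ i < 6, w i = 1 := by
  have hadm := hw.admissible havoid
  have h : 1 ∈ window w 0 6 :=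
    admissible_one_mem _ _ _ _ _ _ (hadm 0) (hadm 1) (hadm 2) (hadm 3)
  simpa [window, eq_comm] using h

lemma IDean.exists_window_g (hw : IDean w) (havoid : ∀ p ∈ S1, ¬ IFactor p w) {m : ℕ}
    (hm : w m = 1) : ∃ c, window w m (g c).length = g c ∧ w (m + (g c).length) = 1 := by
  have hadm := hw.admissible havoid
  suffices ∃ c, window w m ((g c).length + 1) = g c ++ [1] by
    obtain ⟨c, hc⟩ := this
    rw [window_add] at hc
    obtain ⟨hblock, hnext⟩ := List.append_inj hc (length_window _ _ _)
    exact ⟨c, hblock, by simpa [window] using hnext⟩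
  rcases admissible_parse _ _ _ _ _ _ (hm ▸ hadm m) (hadm (m + 1)) (hadm (m + 2)) (hadm (m + 3))
    (hadm (m + 4)) with h | h | h
  · exact ⟨2, by rw [← h, ← hm]; rfl⟩
  · exact ⟨1, by rw [← h, ← hm]; rfl⟩
  · exact ⟨0, by rw [← h, ← hm]; rfl⟩

end DeanWord

lemma eq_wappend_gInf {w : ℕ → Fin 4} {v : ℕ → Fin 3} {i₀ : ℕ}
    (hv : ∀ k, window w i₀ (imagePrefix g v k).length = imagePrefix g v k) :
    w = wappend (window w 0 i₀) (gInf v) := by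
  funext n
  unfold wappend
  split_ifs with hn
  · rw [getD_window w (by simpa using hn), Nat.zero_add]
  · rw [length_window] at hn ⊢
    change w n = (imagePrefix g v (n - i₀ + 1)).getD (n - i₀) 0
    rw [getD_imagePrefix g_ne_nil hv]
    congr 1
    omega

theorem stmt14 (w : ℕ → Fin 4) (hw : IDean w) (havoid : ∀ p ∈ S1, ¬ IFactor p w) :
    ∃ (u : List (Fin 4)) (v : ℕ → Fin 3),
      u.length ≤ 5 ∧ ISqFree v ∧ w = wappend u (gInf v) := by
  obtain ⟨i₀, hi₀, hw₁⟩ := hw.exists_lt_six_eq_one havoid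
  obtain ⟨v, hv⟩ := exists_window_imagePrefix g (fun m => w m = 1)
    (fun _ hm => hw.exists_window_g havoid hm) hw₁
  exact ⟨window w 0 i₀, v, by rw [length_window]; omega, hw.2.of_window_imagePrefix g_ne_nil hv,
    eq_wappend_gInf hv⟩
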